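/- arXiv:2111.09697 — 4 statements merged into one kernel-verified Lean document; each statement's English description precedes it below -/
import Mathlib

section
/- Every element of order two in PGL(2, K), for K a field of characteristic ≠ 2, is conjugate to an element of the form σ_f = [[0, f],[1, 0]] for some f ∈ K*. -/
/-! Lift `σ` to `M ∈ GL(2, K)`. Then `M ^ 2` is a scalar `c` while `M` is not, so some vector `v`
is not an eigenvector of `M`. In the basis `(v, M v)` the matrix `M` sends `v ↦ M v ↦ c v`,
i.e. it becomes `[[0, c], [1, 0]]`. -/

open Matrix

/-- `PGL(2, K)`, the quotient of `GL(2, K)` by its centre (the scalar matrices). -/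
abbrev PGL2 (K : Type*) [Field K] : Type _ :=
  GL (Fin 2) K ⧸ Subgroup.center (GL (Fin 2) K)

/-- The class in `PGL(2, K)` of a matrix with non-zero determinant. -/
noncomputable def pgl2 {K : Type*} [Field K] (M : Matrix (Fin 2) (Fin 2) K)
    (h : M.det ≠ 0) : PGL2 K :=
  QuotientGroup.mk (Matrix.GeneralLinearGroup.mkOfDetNeZero M h)

/-- The class of `[[0, f], [1, 0]]` in `PGL(2, K)`. -/
noncomputable def sigmaPGL {K : Type*} [Field K] (f : Kˣ) : PGL2 K :=
  pgl2 !![0, (f : K); 1, 0] (by simp [Matrix.det_fin_two_of])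

namespace Matrix

theorem exists_linearIndependent_pair_mulVec {K n : Type*} [Field K] [Fintype n]
    [DecidableEq n] {A : Matrix n n K} (hA : A ∉ Set.range (scalar n)) :
    ∃ v, LinearIndependent K ![v, A *ᵥ v] := by
  by_contra! h
  obtain ⟨a, ha⟩ := (toLin' A).exists_eq_smul_id_of_forall_notLinearIndependent h
  refine hA ⟨a, ?_⟩
  rw [← LinearMap.toMatrix'_toLin' A, ha, ← Algebra.algebraMap_eq_smul_one,
    LinearMap.toMatrix'_algebraMap]

theorem mul_transpose_of_pair_mulVec {R : Type*} [CommRing R] {A : Matrix (Fin 2) (Fin 2) R}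
    {c : R} (hA : A * A = scalar (Fin 2) c) (v : Fin 2 → R) :
    A * (of ![v, A *ᵥ v])ᵀ = (of ![v, A *ᵥ v])ᵀ * !![0, c; 1, 0] := by
  have hAAv : A *ᵥ (A *ᵥ v) = c • v := by
    rw [mulVec_mulVec, hA, scalar_apply, ← smul_one_eq_diagonal, smul_mulVec, one_mulVec]
  ext i j
  fin_cases j
  · change (A *ᵥ v) i = _
    simp [mul_apply, Fin.sum_univ_two]
  · change (A *ᵥ (A *ᵥ v)) i = _
    rw [hAAv]
    simp [mul_apply, Fin.sum_univ_two, mul_comm]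

end Matrix

noncomputable def sigmaGL {K : Type*} [Field K] (f : Kˣ) : GL (Fin 2) K :=
  GeneralLinearGroup.mkOfDetNeZero !![0, (f : K); 1, 0] (by simp [det_fin_two_of])

theorem isConj_sigmaGL_of_sq_eq_scalar {K : Type*} [Field K] {M : GL (Fin 2) K} {c : Kˣ}
    (hM : M ^ 2 = GeneralLinearGroup.scalar (Fin 2) c)
    (hM_center : M ∉ Subgroup.center (GL (Fin 2) K)) :
    IsConj (sigmaGL c) M := by
  obtain ⟨v, hv⟩ := exists_linearIndependent_pair_mulVec
    (mt GeneralLinearGroup.mem_center_iff_val_mem_range_scalar.mpr hM_center)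
  have hP : IsUnit (of ![v, M.val *ᵥ v])ᵀ :=
    (isUnit_transpose _).mpr (linearIndependent_rows_iff_isUnit.mp hv)
  refine isConj_iff.mpr ⟨hP.unit, ?_⟩
  rw [mul_inv_eq_iff_eq_mul]
  ext : 1
  exact (mul_transpose_of_pair_mulVec (by simpa [sq] using congrArg Units.val hM) v).symm

theorem order_two_conj_sigma_general {K : Type*} [Field K]
    (σ : PGL2 K) (hσ : orderOf σ = 2) :
    ∃ f : Kˣ, IsConj (sigmaPGL f) σ := by
  obtain ⟨M, rfl⟩ := QuotientGroup.mk_surjective σ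
  have hM_center : M ∉ Subgroup.center (GL (Fin 2) K) := fun h => by
    simp [(QuotientGroup.eq_one_iff M).mpr h] at hσ
  have hM_sq : M ^ 2 ∈ Subgroup.center (GL (Fin 2) K) := by
    rw [← QuotientGroup.eq_one_iff, QuotientGroup.mk_pow]
    exact orderOf_dvd_iff_pow_eq_one.mp (dvd_of_eq hσ)
  rw [GeneralLinearGroup.center_eq_range_scalar] at hM_sq
  obtain ⟨c, hc⟩ := hM_sq
  exact ⟨c, (QuotientGroup.mk' _).map_isConj (isConj_sigmaGL_of_sq_eq_scalar hc.symm hM_center)⟩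

/-- over a field of characteristic ≠ 2, every element of order two in
`PGL(2, K)` is conjugate to `σ_f = [[0, f], [1, 0]]` for some `f ∈ K*`. -/
theorem order_two_conj_sigma {K : Type*} [Field K] (h2 : (2 : K) ≠ 0)
    (σ : PGL2 K) (hσ : orderOf σ = 2) :
    ∃ f : Kˣ, IsConj (sigmaPGL f) σ :=
  order_two_conj_sigma_general σ hσ
end

section
/- Let K be a field of characteristic ≠ 2 and f ∈ K* a non-square. Let σ = [[0, f],[1, 0]] ∈ PGL(2,K). Then the normalizer N_σ of the subgroup ⟨σ⟩ in PGL(2,K) is the set of classes of matrices of the form [[a, bf],[b, a]] or [[a, −bf],[b, −a]] with a, b ∈ K not both zero. -/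
open Matrix

/-! Since `σ` has order two, the normalizer of `⟨σ⟩` is the centralizer of `σ`. The class of `g`
commutes with `σ = [S]` iff `S g = c • g S` for a scalar `c`; comparing determinants gives `c ^ 2 = 1`,
and the cases `c = 1` and `c = -1` are exactly the two families of matrices. -/

theorem Subgroup.mem_zpowers_iff_of_mul_self_eq_one {G : Type*} [Group G] {σ y : G}
    (hσ : σ * σ = 1) : y ∈ Subgroup.zpowers σ ↔ y = 1 ∨ y = σ := by
  have hsq : σ ^ (2 : ℤ) = 1 := by rw [zpow_two, hσ]
  constructor
  · rintro ⟨k, rfl⟩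
    dsimp only
    rw [zpow_eq_zpow_emod k hsq]
    rcases Int.emod_two_eq_zero_or_one k with h | h <;> simp [h]
  · rintro (rfl | rfl)
    exacts [one_mem _, mem_zpowers _]

theorem Subgroup.mem_normalizer_zpowers_iff_commute {G : Type*} [Group G] {σ x : G}
    (hσ : σ * σ = 1) : x ∈ Subgroup.normalizer (Subgroup.zpowers σ : Set G) ↔ Commute x σ := by
  constructor
  · intro hx
    have hconj := (Subgroup.mem_normalizer_iff.mp hx σ).mp (Subgroup.mem_zpowers σ)
    rcases (mem_zpowers_iff_of_mul_self_eq_one hσ).mp hconj with h | h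
    · rw [mul_inv_eq_one, mul_eq_left] at h
      simp [h]
    · exact mul_inv_eq_iff_eq_mul.mp h
  · intro hx
    refine Subgroup.centralizer_le_normalizer _ (Subgroup.mem_centralizer_iff.mpr ?_)
    rintro _ ⟨k, rfl⟩
    exact (hx.zpow_right k).eq.symm

namespace Matrix

variable {n R : Type*} [Fintype n] [DecidableEq n] [CommRing R]

theorem pow_card_eq_one_of_mul_eq_smul_mul {A B : Matrix n n R} (hBA : IsUnit (B * A).det)
    {c : R} (h : A * B = c • (B * A)) : c ^ Fintype.card n = 1 := by
  have hdet := congrArg det h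
  rw [det_smul, det_mul, mul_comm, ← det_mul] at hdet
  exact (hBA.mul_eq_right).mp hdet.symm

namespace GeneralLinearGroup

theorem mk_eq_mk_iff_exists_smul (g h : GL n R) :
    (g : GL n R ⧸ Subgroup.center (GL n R)) = h ↔
      ∃ c : R, (h : Matrix n n R) = c • (g : Matrix n n R) := by
  rw [QuotientGroup.eq, mem_center_iff_val_mem_range_scalar]
  refine exists_congr fun c => ?_
  rw [scalar_apply, ← smul_one_eq_diagonal, Units.val_mul]
  constructor
  · intro hc
    rw [← mul_inv_cancel_left g h, Units.val_mul, Units.val_mul, ← hc, mul_smul_comm, mul_one]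
  · intro hc
    rw [hc, mul_smul_comm, ← Units.val_mul, inv_mul_cancel, Units.val_one]

theorem commute_mk_iff_exists_smul (g s : GL n R) :
    Commute (g : GL n R ⧸ Subgroup.center (GL n R)) s ↔
      ∃ c : R, (s : Matrix n n R) * g = c • ((g : Matrix n n R) * s) := by
  rw [commute_iff_eq, ← QuotientGroup.mk_mul, ← QuotientGroup.mk_mul,
    mk_eq_mk_iff_exists_smul, ← Units.val_mul, ← Units.val_mul]

end GeneralLinearGroup

variable (f : R) (M : Matrix (Fin 2) (Fin 2) R)

theorem antidiag_mul_eq_mul_antidiag_iff :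
    !![0, f; 1, 0] * M = M * !![0, f; 1, 0] ↔ ∃ a b : R, M = !![a, b * f; b, a] := by
  obtain ⟨p, q, r, s, rfl⟩ : ∃ p q r s, M = !![p, q; r, s] := ⟨_, _, _, _, eta_fin_two M⟩
  simp only [mul_fin_two, EmbeddingLike.apply_eq_iff_eq, vecCons_inj, and_true,
    zero_mul, one_mul, zero_add, add_zero, mul_zero, mul_one]
  constructor
  · rintro ⟨-, hps, hq⟩
    exact ⟨p, r, ⟨rfl, hq⟩, rfl, hps.symm⟩
  · rintro ⟨a, b, ⟨rfl, rfl⟩, rfl, rfl⟩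
    exact ⟨⟨mul_comm _ _, mul_comm _ _⟩, rfl, rfl⟩

theorem antidiag_mul_eq_neg_mul_antidiag_iff :
    !![0, f; 1, 0] * M = -(M * !![0, f; 1, 0]) ↔ ∃ a b : R, M = !![a, -(b * f); b, -a] := by
  obtain ⟨p, q, r, s, rfl⟩ : ∃ p q r s, M = !![p, q; r, s] := ⟨_, _, _, _, eta_fin_two M⟩
  simp only [mul_fin_two, neg_of, neg_cons, neg_empty, EmbeddingLike.apply_eq_iff_eq, vecCons_inj,
    and_true, zero_mul, one_mul, zero_add, add_zero, mul_zero, mul_one]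
  constructor
  · rintro ⟨-, hps, hq⟩
    exact ⟨p, r, ⟨rfl, hq⟩, rfl, by rw [hps, neg_neg]⟩
  · rintro ⟨a, b, ⟨rfl, rfl⟩, rfl, rfl⟩
    exact ⟨⟨by ring, by ring⟩, by ring, rfl⟩

end Matrix

section Sigma

variable {K : Type*} [Field K]

theorem sigmaPGL_mul_self (f : Kˣ) : sigmaPGL f * sigmaPGL f = 1 := by
  rw [sigmaPGL, pgl2, ← QuotientGroup.mk_mul, QuotientGroup.eq_one_iff,
    GeneralLinearGroup.mem_center_iff_val_mem_range_scalar]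
  refine ⟨f, ?_⟩
  ext i j
  fin_cases i <;> fin_cases j <;> simp

theorem mk_mem_normalizer_zpowers_sigmaPGL_iff (f : Kˣ) (g : GL (Fin 2) K) :
    (g : PGL2 K) ∈ Subgroup.normalizer (Subgroup.zpowers (sigmaPGL f) : Set (PGL2 K)) ↔
      ∃ a b : K, (g : Matrix (Fin 2) (Fin 2) K) = !![a, b * f; b, a] ∨
        (g : Matrix (Fin 2) (Fin 2) K) = !![a, -(b * f); b, -a] := by
  rw [Subgroup.mem_normalizer_zpowers_iff_commute (sigmaPGL_mul_self f), sigmaPGL, pgl2,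
    GeneralLinearGroup.commute_mk_iff_exists_smul, GeneralLinearGroup.val_mkOfDetNeZero]
  simp only [exists_or, ← antidiag_mul_eq_mul_antidiag_iff, ← antidiag_mul_eq_neg_mul_antidiag_iff]
  constructor
  · rintro ⟨c, hc⟩
    have hdet : IsUnit ((g : Matrix (Fin 2) (Fin 2) K) * !![0, (f : K); 1, 0]).det := by
      simpa [det_fin_two_of] using (isUnits_det_units g).ne_zero
    have hc2 : c ^ 2 = 1 := pow_card_eq_one_of_mul_eq_smul_mul hdet hc
    rcases sq_eq_one_iff.mp hc2 with rfl | rfl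
    · exact .inl (by simpa using hc)
    · exact .inr (by simpa using hc)
  · rintro (hc | hc)
    · exact ⟨1, by simpa using hc⟩
    · exact ⟨-1, by simpa using hc⟩

end Sigma

theorem normalizer_sigma_description_general {K : Type*} [Field K]
    (f : Kˣ) (x : PGL2 K) :
    x ∈ Subgroup.normalizer (Subgroup.zpowers (sigmaPGL f)) ↔
      ∃ (g : GL (Fin 2) K) (a b : K),
        (QuotientGroup.mk g : PGL2 K) = x ∧
        ((g : Matrix (Fin 2) (Fin 2) K) = !![a, b * f; b, a] ∨
          (g : Matrix (Fin 2) (Fin 2) K) = !![a, -(b * f); b, -a]) := by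
  constructor
  · intro hx
    obtain ⟨g, rfl⟩ := QuotientGroup.mk_surjective x
    obtain ⟨a, b, hg⟩ := (mk_mem_normalizer_zpowers_sigmaPGL_iff f g).mp hx
    exact ⟨g, a, b, rfl, hg⟩
  · rintro ⟨g, a, b, rfl, hg⟩
    exact (mk_mem_normalizer_zpowers_sigmaPGL_iff f g).mpr ⟨a, b, hg⟩

/-- for a non-square `f ∈ K*` (char K ≠ 2) and
`σ = [[0, f], [1, 0]] ∈ PGL(2, K)`, the normalizer of `⟨σ⟩` consists exactly of
the classes of matrices of the form `[[a, bf], [b, a]]` or `[[a, -bf], [b, -a]]`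
(the condition `(a, b) ≠ (0, 0)` being automatic from invertibility). -/
theorem normalizer_sigma_description {K : Type*} [Field K] (h2 : (2 : K) ≠ 0)
    (f : Kˣ) (hf : ¬ IsSquare f) (x : PGL2 K) :
    x ∈ Subgroup.normalizer (Subgroup.zpowers (sigmaPGL f)) ↔
      ∃ (g : GL (Fin 2) K) (a b : K),
        (QuotientGroup.mk g : PGL2 K) = x ∧
        ((g : Matrix (Fin 2) (Fin 2) K) = !![a, b * f; b, a] ∨
          (g : Matrix (Fin 2) (Fin 2) K) = !![a, -(b * f); b, -a]) :=
  normalizer_sigma_description_general f x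
end

section
/- Let K be a field of characteristic ≠ 2 and f ∈ K* a non-square, σ = [[0,f],[1,0]] ∈ PGL(2,K). The normalizer N_σ of ⟨σ⟩ decomposes as a semidirect product N_σ ≅ N°_σ ⋊ ℤ/2ℤ, where ℤ/2ℤ is generated by the class of the diagonal involution diag(1, −1), and conjugation by diag(1,−1) sends the class of [[a, bf],[b, a]] to the class of [[a, −bf],[−b, a]]. -/
open Matrix

/-- The class of the diagonal involution `diag(1, -1)` in `PGL(2, K)`. -/
noncomputable def diagInv (K : Type*) [Field K] : PGL2 K :=
  pgl2 !![(1 : K), 0; 0, -1] (by norm_num [Matrix.det_fin_two_of])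

/-! Since `σ²` is scalar, `σ` has order `2` in `PGL(2, K)`, so its normalizer is its centralizer.
Classes of `g` and `h` commute in `PGL(2, K)` iff `g h = ± h g`, and `diag(1, -1)`
anticommutes with `s = [[0, f], [1, 0]]`. Hence an element of the normalizer is the class
either of a matrix commuting with `s`, i.e. of the form `[[a, bf], [b, a]]`, or of such a
matrix times `diag(1, -1)`. -/

namespace Subgroup

variable {G : Type*} [Group G]

theorem normalizer_zpowers_eq_centralizer_of_orderOf_eq_two {s : G} (hs : orderOf s = 2) :
    normalizer (zpowers s : Set G) = centralizer {s} := by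
  refine le_antisymm (fun x hx => ?_) ?_
  · obtain ⟨n, hn⟩ := mem_zpowers_iff.mp <| (mem_normalizer_iff.mp hx s).mp (mem_zpowers s)
    rw [← zpow_mod_orderOf, hs] at hn
    rw [mem_centralizer_singleton_iff, ← mul_inv_eq_iff_eq_mul]
    rcases Int.emod_two_eq_zero_or_one n with h | h <;>
      simp only [h, Nat.cast_ofNat, zpow_zero, zpow_one] at hn
    · rw [eq_comm, mul_inv_eq_one, mul_eq_left] at hn
      exact absurd hn (by rintro rfl; simp at hs)
    · exact hn.symm
  · rw [zpowers_eq_closure, ← centralizer_closure]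
    exact centralizer_le_normalizer _

end Subgroup

namespace PGL2

variable {K : Type*} [Field K]

theorem mk_eq_mk_iff {g h : GL (Fin 2) K} :
    (QuotientGroup.mk g : PGL2 K) = QuotientGroup.mk h ↔
      ∃ c : Kˣ, (h : Matrix (Fin 2) (Fin 2) K) = (c : K) • g := by
  rw [← QuotientGroup.mk'_apply, ← QuotientGroup.mk'_apply, QuotientGroup.mk'_eq_mk',
    GeneralLinearGroup.center_eq_range_scalar]
  constructor
  · rintro ⟨_, ⟨c, rfl⟩, rfl⟩
    exact ⟨c, by simp [smul_eq_mul_diagonal]⟩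
  · rintro ⟨c, hc⟩
    exact ⟨_, ⟨c, rfl⟩, Units.ext (by simp [hc, smul_eq_mul_diagonal])⟩

/-- The scalar relating `g * h` and `h * g` squares to `1`, by comparing determinants. -/
theorem commute_mk_iff {g h : GL (Fin 2) K} :
    Commute (QuotientGroup.mk g : PGL2 K) (QuotientGroup.mk h) ↔
      Commute g h ∨ g * h = -(h * g) := by
  rw [commute_iff_eq, commute_iff_eq, ← QuotientGroup.mk_mul, ← QuotientGroup.mk_mul,
    mk_eq_mk_iff, Units.ext_iff, Units.ext_iff, Units.val_neg]
  constructor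
  · rintro ⟨c, hc⟩
    have hdet : ((g * h : GL (Fin 2) K) : Matrix (Fin 2) (Fin 2) K).det ≠ 0 :=
      ((g * h).isUnit.map detMonoidHom).ne_zero
    have hc2 : (c : K) ^ 2 = 1 := by
      have := congrArg det hc
      rw [det_smul, Fintype.card_fin, Units.val_mul, Units.val_mul, det_mul, det_mul,
        mul_comm (det _), ← det_mul, ← Units.val_mul] at this
      exact (mul_eq_right₀ hdet).mp this.symm
    rcases sq_eq_one_iff.mp hc2 with hc1 | hc1
    · left; simpa [hc1] using hc.symm
    · right; simp [hc, hc1]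
  · rintro (hgh | hgh)
    · exact ⟨1, by simp [hgh]⟩
    · exact ⟨-1, by simp [hgh]⟩

noncomputable def sigmaGL (f : Kˣ) : GL (Fin 2) K :=
  GeneralLinearGroup.mkOfDetNeZero !![0, (f : K); 1, 0] (by simp [det_fin_two_of])

variable (K) in
noncomputable def diagGL : GL (Fin 2) K :=
  GeneralLinearGroup.mkOfDetNeZero !![(1 : K), 0; 0, -1] (by norm_num [det_fin_two_of])

theorem sigmaPGL_eq_mk (f : Kˣ) : sigmaPGL f = QuotientGroup.mk (sigmaGL f) := rfl

variable (K) in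
theorem diagInv_eq_mk : diagInv K = QuotientGroup.mk (diagGL K) := rfl

theorem mem_centralizer_sigmaGL_iff {f : Kˣ} {g : GL (Fin 2) K} :
    g ∈ Subgroup.centralizer {sigmaGL f} ↔
      ∃ a b : K, (g : Matrix (Fin 2) (Fin 2) K) = !![a, b * f; b, a] := by
  rw [Subgroup.mem_centralizer_singleton_iff, Units.ext_iff, Units.val_mul, Units.val_mul]
  generalize (g : Matrix (Fin 2) (Fin 2) K) = M
  rw [eta_fin_two M]
  simp only [sigmaGL, GeneralLinearGroup.val_mkOfDetNeZero, mul_fin_two, ← Matrix.ext_iff,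
    Fin.forall_fin_two, of_apply, cons_val', cons_val_zero, cons_val_one, empty_val',
    cons_val_fin_one, mul_zero, mul_one, zero_mul, one_mul, add_zero, zero_add]
  constructor
  · rintro ⟨⟨h01, -⟩, h11, -⟩
    exact ⟨M 0 0, M 1 0, ⟨rfl, h01.trans (mul_comm _ _)⟩, rfl, h11⟩
  · rintro ⟨a, b, ⟨h00, h01⟩, h10, h11⟩
    grind

theorem sigmaGL_mul_diagGL (f : Kˣ) : sigmaGL f * diagGL K = -(diagGL K * sigmaGL f) := by
  ext1; simp [sigmaGL, diagGL]

theorem diagGL_mul_self : diagGL K * diagGL K = 1 := by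
  ext1; simp [diagGL, one_fin_two]

theorem diagGL_mul_mul_diagGL {f : Kˣ} {g g' : GL (Fin 2) K} {a b : K}
    (hg : (g : Matrix (Fin 2) (Fin 2) K) = !![a, b * f; b, a])
    (hg' : (g' : Matrix (Fin 2) (Fin 2) K) = !![a, -(b * f); -b, a]) :
    diagGL K * g * diagGL K = g' := by
  ext1; simp [diagGL, hg, hg']

theorem diagGL_notMem_centralizer (h2 : (2 : K) ≠ 0) (f : Kˣ) :
    diagGL K ∉ Subgroup.centralizer {sigmaGL f} := by
  intro h
  have h10 := congrArg (fun g : GL (Fin 2) K => (g : Matrix (Fin 2) (Fin 2) K) 1 0)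
    (Subgroup.mem_centralizer_singleton_iff.mp h)
  simp [sigmaGL, diagGL] at h10
  exact h2 (by linear_combination -h10)

theorem orderOf_sigmaPGL (f : Kˣ) : orderOf (sigmaPGL f) = 2 := by
  refine orderOf_eq_prime ?_ ?_
  · rw [sq, sigmaPGL_eq_mk, ← QuotientGroup.mk_mul, QuotientGroup.eq_one_iff,
      GeneralLinearGroup.center_eq_range_scalar]
    exact ⟨f, by ext1; simp [sigmaGL, diagonal_fin_two]⟩
  · rw [sigmaPGL_eq_mk, Ne, QuotientGroup.eq_one_iff, GeneralLinearGroup.center_eq_range_scalar]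
    rintro ⟨c, hc⟩
    simpa [sigmaGL] using
      congrArg (fun g : GL (Fin 2) K => (g : Matrix (Fin 2) (Fin 2) K) 1 0) hc

theorem mem_centralizer_sigmaGL_or_of_commute {f : Kˣ} {g : GL (Fin 2) K}
    (h : Commute (QuotientGroup.mk g : PGL2 K) (sigmaPGL f)) :
    g ∈ Subgroup.centralizer {sigmaGL f} ∨
      g * diagGL K ∈ Subgroup.centralizer {sigmaGL f} := by
  rw [sigmaPGL_eq_mk, commute_mk_iff] at h
  simp only [Subgroup.mem_centralizer_singleton_iff]
  refine h.imp Commute.eq fun hanti => ?_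
  have hDS : diagGL K * sigmaGL f = -(sigmaGL f * diagGL K) := by
    rw [sigmaGL_mul_diagGL, neg_neg]
  rw [mul_assoc, hDS, mul_neg, ← mul_assoc, hanti, neg_mul, neg_neg, mul_assoc]

/-- `N°_σ`: the image in `PGL(2, K)` of the centralizer of `[[0, f], [1, 0]]` in `GL(2, K)`. -/
noncomputable def normalizerSigmaZero (f : Kˣ) : Subgroup (PGL2 K) :=
  (Subgroup.centralizer {sigmaGL f}).map (QuotientGroup.mk' _)

theorem mem_normalizerSigmaZero_iff {f : Kˣ} {x : PGL2 K} :
    x ∈ normalizerSigmaZero f ↔ ∃ (g : GL (Fin 2) K) (a b : K),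
      (QuotientGroup.mk g : PGL2 K) = x ∧
        (g : Matrix (Fin 2) (Fin 2) K) = !![a, b * f; b, a] := by
  simp only [normalizerSigmaZero, Subgroup.mem_map, mem_centralizer_sigmaGL_iff,
    QuotientGroup.mk'_apply]
  grind

theorem mk_mem_normalizerSigmaZero_iff {f : Kˣ} {g : GL (Fin 2) K} :
    (QuotientGroup.mk g : PGL2 K) ∈ normalizerSigmaZero f ↔
      g ∈ Subgroup.centralizer {sigmaGL f} := by
  rw [← QuotientGroup.mk'_apply, normalizerSigmaZero, ← Subgroup.mem_comap,
    Subgroup.comap_map_eq_self]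
  rw [QuotientGroup.ker_mk']
  exact Subgroup.center_le_centralizer _

end PGL2

open PGL2

theorem normalizer_semidirect_general {K : Type*} [Field K] (h2 : (2 : K) ≠ 0)
    (f : Kˣ) :
    ∃ H : Subgroup (PGL2 K),
      (∀ x : PGL2 K, x ∈ H ↔
        ∃ (g : GL (Fin 2) K) (a b : K),
          (QuotientGroup.mk g : PGL2 K) = x ∧
          (g : Matrix (Fin 2) (Fin 2) K) = !![a, b * f; b, a]) ∧
      H ≤ Subgroup.normalizer (Subgroup.zpowers (sigmaPGL f)) ∧
      diagInv K ∈ Subgroup.normalizer (Subgroup.zpowers (sigmaPGL f)) ∧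
      diagInv K * diagInv K = 1 ∧
      diagInv K ∉ H ∧
      -- every element of the normalizer decomposes (uniquely, by the two previous
      -- facts) as an element of `N°_σ` times a power of `d`
      (∀ x ∈ Subgroup.normalizer (Subgroup.zpowers (sigmaPGL f)),
        x ∈ H ∨ x * diagInv K ∈ H) ∧
      -- the action of `ℤ/2ℤ` on `N°_σ`
      (∀ (g g' : GL (Fin 2) K) (a b : K),
        (g : Matrix (Fin 2) (Fin 2) K) = !![a, b * f; b, a] →
        (g' : Matrix (Fin 2) (Fin 2) K) = !![a, -(b * f); -b, a] →
        diagInv K * (QuotientGroup.mk g : PGL2 K) * (diagInv K)⁻¹ =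
          QuotientGroup.mk g') := by
  have hN := Subgroup.normalizer_zpowers_eq_centralizer_of_orderOf_eq_two (orderOf_sigmaPGL f)
  have hdd : diagInv K * diagInv K = 1 := by
    rw [diagInv_eq_mk, ← QuotientGroup.mk_mul]
    exact congrArg _ diagGL_mul_self
  refine ⟨normalizerSigmaZero f, fun x => mem_normalizerSigmaZero_iff, ?_, ?_, hdd, ?_, ?_, ?_⟩
  · rw [hN, sigmaPGL_eq_mk, ← QuotientGroup.mk'_apply, ← Set.image_singleton]
    exact Subgroup.map_centralizer_le_centralizer_image _ _
  · rw [hN, Subgroup.mem_centralizer_singleton_iff]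
    exact (commute_mk_iff.mpr (Or.inr (sigmaGL_mul_diagGL f))).eq.symm
  · exact mk_mem_normalizerSigmaZero_iff.not.mpr (diagGL_notMem_centralizer h2 f)
  · intro x hx
    rw [hN, Subgroup.mem_centralizer_singleton_iff] at hx
    obtain ⟨g, rfl⟩ := QuotientGroup.mk_surjective x
    exact (mem_centralizer_sigmaGL_or_of_commute hx).imp mk_mem_normalizerSigmaZero_iff.mpr
      mk_mem_normalizerSigmaZero_iff.mpr
  · intro g g' a b hg hg'
    rw [inv_eq_of_mul_eq_one_right hdd, diagInv_eq_mk, ← QuotientGroup.mk_mul,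
      ← QuotientGroup.mk_mul, diagGL_mul_mul_diagGL hg hg']

/-- for a non-square `f ∈ K*` (char K ≠ 2) and
`σ = [[0, f], [1, 0]]`, the normalizer `N_σ` of `⟨σ⟩` is the (internal)
semidirect product `N°_σ ⋊ ℤ/2ℤ` where `N°_σ` is the subgroup of classes of
matrices `[[a, bf], [b, a]]` and `ℤ/2ℤ` is generated by the class `d` of
`diag(1, -1)`; conjugation by `d` sends `[[a, bf], [b, a]]` to
`[[a, -bf], [-b, a]]`. -/
theorem normalizer_semidirect {K : Type*} [Field K] (h2 : (2 : K) ≠ 0)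
    (f : Kˣ) (hf : ¬ IsSquare f) :
    ∃ H : Subgroup (PGL2 K),
      (∀ x : PGL2 K, x ∈ H ↔
        ∃ (g : GL (Fin 2) K) (a b : K),
          (QuotientGroup.mk g : PGL2 K) = x ∧
          (g : Matrix (Fin 2) (Fin 2) K) = !![a, b * f; b, a]) ∧
      H ≤ Subgroup.normalizer (Subgroup.zpowers (sigmaPGL f)) ∧
      diagInv K ∈ Subgroup.normalizer (Subgroup.zpowers (sigmaPGL f)) ∧
      diagInv K * diagInv K = 1 ∧
      diagInv K ∉ H ∧
      -- every element of the normalizer decomposes (uniquely, by the two previous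
      -- facts) as an element of `N°_σ` times a power of `d`
      (∀ x ∈ Subgroup.normalizer (Subgroup.zpowers (sigmaPGL f)),
        x ∈ H ∨ x * diagInv K ∈ H) ∧
      -- the action of `ℤ/2ℤ` on `N°_σ`
      (∀ (g g' : GL (Fin 2) K) (a b : K),
        (g : Matrix (Fin 2) (Fin 2) K) = !![a, b * f; b, a] →
        (g' : Matrix (Fin 2) (Fin 2) K) = !![a, -(b * f); -b, a] →
        diagInv K * (QuotientGroup.mk g : PGL2 K) * (diagInv K)⁻¹ =
          QuotientGroup.mk g') :=
  normalizer_semidirect_general h2 f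
end

section
/- Let G be a finite subgroup of PGL(2, K) for K a field of characteristic ≠ 2, such that every non-identity element of G has order two. Then G is isomorphic to (ℤ/2ℤ)^r for some r ∈ {0, 1, 2}. -/
open Matrix

/-! A nontrivial involution of `PGL(2, K)` lifts to a trace-zero matrix, and for trace-zero
`2 × 2` matrices `XY + YX = tr(XY) • 1`; hence lifts of two distinct commuting involutions
anticommute. If `G` contained `a`, `b` and some `c ∉ {1, a, b, ab}`, a lift `A` of `a` would
anticommute with lifts `B`, `C`, `BC` of `b`, `c`, `bc`, giving `A(BC) = BCA = -BCA`,
impossible when `2 ≠ 0`. So `|G| ≤ 4`, and `G`, an elementary abelian `2`-group, is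
`(ℤ/2ℤ)^r` with `r ≤ 2`. -/

open QuotientGroup

theorem exists_mulEquiv_fin_pi_zmod_two {H : Type*} [Group H] [Finite H]
    (h : ∀ x : H, x ^ 2 = 1) :
    ∃ r : ℕ, Nonempty (H ≃* (Fin r → Multiplicative (ZMod 2))) := by
  let _ : CommGroup H :=
    { mul_comm := fun a b ↦
        (Commute.of_orderOf_dvd_two (fun g ↦ orderOf_dvd_of_pow_eq_one (h g)) a b).eq }
  let _ : Module (ZMod 2) (Additive H) := AddCommGroup.zmodModule fun x ↦ h x.toMul
  let b := Module.finBasis (ZMod 2) (Additive H)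
  exact ⟨_, ⟨(AddEquiv.toMultiplicative b.equivFun.toAddEquiv).trans
    (MulEquiv.funMultiplicative _ _)⟩⟩

namespace Matrix

variable {R : Type*} [CommRing R]

theorem mul_self_eq_trace_smul_sub_scalar_det (A : Matrix (Fin 2) (Fin 2) R) :
    A * A = A.trace • A - scalar (Fin 2) A.det := by
  ext i j
  fin_cases i <;> fin_cases j <;>
    simp [mul_apply, trace_fin_two, det_fin_two] <;> ring

theorem mul_add_mul_eq_scalar_trace_mul {A B : Matrix (Fin 2) (Fin 2) R}
    (hA : A.trace = 0) (hB : B.trace = 0) :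
    A * B + B * A = scalar (Fin 2) (A * B).trace := by
  rw [trace_fin_two, add_eq_zero_iff_eq_neg'] at hA hB
  ext i j
  fin_cases i <;> fin_cases j <;>
    simp [mul_apply, trace_fin_two, hA, hB] <;> ring

end Matrix

namespace PGL2

variable {K : Type*} [Field K]

theorem mk_eq_one_iff (A : GL (Fin 2) K) :
    (mk A : PGL2 K) = 1 ↔ (A : Matrix (Fin 2) (Fin 2) K) ∈ Set.range (scalar (Fin 2)) :=
  (eq_one_iff A).trans GeneralLinearGroup.mem_center_iff_val_mem_range_scalar

theorem trace_eq_zero_of_sq_eq_one {A : GL (Fin 2) K} (hsq : (mk A : PGL2 K) ^ 2 = 1)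
    (hne : (mk A : PGL2 K) ≠ 1) : (A : Matrix (Fin 2) (Fin 2) K).trace = 0 := by
  obtain ⟨c, hc⟩ := (mk_eq_one_iff (A ^ 2)).1 (by rwa [mk_pow])
  rw [Units.val_pow_eq_pow_val, sq, mul_self_eq_trace_smul_sub_scalar_det,
    eq_sub_iff_add_eq, ← map_add] at hc
  by_contra htr
  refine hne ((mk_eq_one_iff A).2 ⟨A.val.trace⁻¹ * (c + A.val.det), ?_⟩)
  rw [map_mul, hc, scalar_apply, ← smul_eq_diagonal_mul, inv_smul_smul₀ htr]

theorem mul_eq_neg_mul_of_sq_eq_one {A B : GL (Fin 2) K}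
    (hA : (mk A : PGL2 K) ^ 2 = 1) (hB : (mk B : PGL2 K) ^ 2 = 1)
    (hAB : (mk A * mk B : PGL2 K) ^ 2 = 1) (hA1 : (mk A : PGL2 K) ≠ 1)
    (hB1 : (mk B : PGL2 K) ≠ 1) (hAB1 : (mk A * mk B : PGL2 K) ≠ 1) :
    (A * B : Matrix (Fin 2) (Fin 2) K) = -(B * A) := by
  have htr := trace_eq_zero_of_sq_eq_one (A := A * B) (by rwa [mk_mul]) (by rwa [mk_mul])
  have h := mul_add_mul_eq_scalar_trace_mul (trace_eq_zero_of_sq_eq_one hA hA1)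
    (trace_eq_zero_of_sq_eq_one hB hB1)
  rw [← Units.val_mul, htr, map_zero] at h
  exact eq_neg_of_add_eq_zero_left h

theorem mem_of_forall_sq_eq_one (h2 : (2 : K) ≠ 0) {G : Subgroup (PGL2 K)}
    (hG : ∀ x ∈ G, x ^ 2 = 1) {a b c : PGL2 K} (ha : a ∈ G) (hb : b ∈ G) (hc : c ∈ G)
    (ha1 : a ≠ 1) (hb1 : b ≠ 1) (hab : a ≠ b) : c ∈ ({1, a, b, a * b} : Set (PGL2 K)) := by
  have eq_of_mul_eq_one {x y : PGL2 K} (hx : x ∈ G) (h : x * y = 1) : y = x :=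
    (eq_inv_of_mul_eq_one_right h).trans (inv_eq_of_mul_eq_one_right (sq x ▸ hG x hx))
  have anticomm {X Y : GL (Fin 2) K} (hX : (mk X : PGL2 K) ∈ G) (hY : (mk Y : PGL2 K) ∈ G)
      (hX1 : (mk X : PGL2 K) ≠ 1) (hY1 : (mk Y : PGL2 K) ≠ 1) (hXY : (mk X : PGL2 K) ≠ mk Y) :
      (X * Y : Matrix (Fin 2) (Fin 2) K) = -(Y * X) :=
    mul_eq_neg_mul_of_sq_eq_one (hG _ hX) (hG _ hY) (hG _ (mul_mem hX hY)) hX1 hY1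
      fun h ↦ hXY (eq_of_mul_eq_one hX h).symm
  by_contra hc'
  simp only [Set.mem_insert_iff, Set.mem_singleton_iff, not_or] at hc'
  obtain ⟨hc1, hca, hcb, hcab⟩ := hc'
  obtain ⟨A, rfl⟩ := mk_surjective a
  obtain ⟨B, rfl⟩ := mk_surjective b
  obtain ⟨C, rfl⟩ := mk_surjective c
  have hBC : (mk (B * C) : PGL2 K) ∈ G := by rw [mk_mul]; exact mul_mem hb hc
  have hBC1 : (mk (B * C) : PGL2 K) ≠ 1 :=
    fun h ↦ hcb (eq_of_mul_eq_one hb (by rwa [mk_mul] at h))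
  have hABC : (mk A : PGL2 K) ≠ mk (B * C) := fun h ↦
    hcab <| eq_of_mul_eq_one (mul_mem ha hb) <| by
      rw [mul_assoc, ← mk_mul, ← h, ← sq, hG _ ha]
  have hAB := anticomm ha hb ha1 hb1 hab
  have hAC := anticomm ha hc ha1 hc1 (Ne.symm hca)
  have hA_BC := anticomm ha hBC ha1 hBC1 hABC
  rw [Units.val_mul] at hA_BC
  have hBCA : (A * (B * C) : Matrix (Fin 2) (Fin 2) K) = B * C * A := by
    rw [← mul_assoc, hAB, neg_mul, mul_assoc, hAC, mul_neg, neg_neg, mul_assoc]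
  have h2BCA : (2 : K) • (B * C * A : Matrix (Fin 2) (Fin 2) K) = 0 := by
    rw [two_smul]
    nth_rw 1 [← hBCA]
    rw [hA_BC, neg_add_cancel]
  exact (B * C * A).ne_zero <| by
    rw [Units.val_mul, Units.val_mul]; exact (smul_eq_zero.1 h2BCA).resolve_left h2

theorem card_le_four_of_forall_sq_eq_one (h2 : (2 : K) ≠ 0) {G : Subgroup (PGL2 K)}
    (hG : ∀ x ∈ G, x ^ 2 = 1) : Nat.card G ≤ 4 := by
  classical
  rw [← SetLike.coe_sort_coe, Nat.card_coe_set_eq]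
  by_contra! hG4
  have exists_mem_notMem (s : Finset (PGL2 K)) (hs : s.card ≤ 4) : ∃ x ∈ G, x ∉ s :=
    Set.exists_mem_notMem_of_ncard_lt_ncard
      ((Set.ncard_coe_finset s).trans_lt (hs.trans_lt hG4))
  obtain ⟨a, ha, ha1⟩ := exists_mem_notMem {1} (by simp)
  obtain ⟨b, hb, hb'⟩ := exists_mem_notMem {1, a} (Finset.card_le_two.trans (by norm_num))
  obtain ⟨c, hc, hc'⟩ := exists_mem_notMem {1, a, b, a * b} Finset.card_le_four
  simp only [Finset.mem_insert, Finset.mem_singleton, not_or] at ha1 hb'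
  exact hc' (by simpa using mem_of_forall_sq_eq_one h2 hG ha hb hc ha1 hb'.1 (Ne.symm hb'.2))

end PGL2

/-- a finite subgroup of `PGL(2, K)` (char K ≠ 2) all of whose
non-identity elements have order two is isomorphic to `(ℤ/2ℤ)^r` for some
`r ∈ {0, 1, 2}`. -/
theorem elementary_two_subgroup_rank_le_two {K : Type*} [Field K]
    (h2 : (2 : K) ≠ 0) (G : Subgroup (PGL2 K)) (hfin : Finite G)
    (hinv : ∀ x ∈ G, x ≠ 1 → orderOf x = 2) :
    ∃ r : ℕ, r ≤ 2 ∧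
      Nonempty ((G : Subgroup (PGL2 K)) ≃* (Fin r → Multiplicative (ZMod 2))) := by
  have hG : ∀ x ∈ G, x ^ 2 = 1 := fun x hx ↦ by
    rcases eq_or_ne x 1 with rfl | hx1
    · exact one_pow 2
    · exact orderOf_dvd_iff_pow_eq_one.1 (dvd_of_eq (hinv x hx hx1))
  obtain ⟨r, ⟨e⟩⟩ := exists_mulEquiv_fin_pi_zmod_two (H := G) fun x ↦
    Subtype.ext (hG x x.2)
  refine ⟨r, (Nat.pow_le_pow_iff_right one_lt_two).1 ?_, ⟨e⟩⟩
  calc 2 ^ r = Nat.card G := by simp [Nat.card_congr e.toEquiv]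
    _ ≤ 2 ^ 2 := PGL2.card_le_four_of_forall_sq_eq_one h2 hG
end
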